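/- arXiv:2012.08558 — 3 statements merged into one kernel-verified Lean document; each statement's English description precedes it below -/
import Mathlib

section
/- For every positive integer k and every complex z with |z| > 0 and Re(z) > 0, ∑_{j=0}^{k} z^j/j! = (1/k!) ∫_0^1 (z - log u)^k du. -/
open MeasureTheory Complex

/-! The substitution `u = exp (-x)` turns the integral into `∫₀^∞ e^{-x} (z + x)^k dx`; expanding
`(z + x)^k` binomially, each term is a Gamma integral `∫₀^∞ e^{-x} x^m dx = m!`, and
`k.choose j * (k - j)! = k! / j!`. -/

open Set Nat

theorem integral_Ioo_zero_one_comp_log {E : Type*} [NormedAddCommGroup E] [NormedSpace ℝ E]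
    (g : ℝ → E) :
    ∫ u in Ioo (0 : ℝ) 1, g (Real.log u) = ∫ x in Ioi (0 : ℝ), Real.exp (-x) • g (-x) := by
  have himage : (fun x : ℝ => Real.exp (-x)) '' Ioi 0 = Ioo 0 1 := by
    ext u
    constructor
    · rintro ⟨x, hx, rfl⟩
      exact ⟨Real.exp_pos _, Real.exp_lt_one_iff.mpr (neg_neg_iff_pos.mpr hx)⟩
    · rintro ⟨hu0, hu1⟩
      exact ⟨-Real.log u, neg_pos.mpr (Real.log_neg hu0 hu1), by simp [Real.exp_log hu0]⟩
  have hderiv : ∀ x ∈ Ioi (0 : ℝ),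
      HasDerivWithinAt (fun x : ℝ => Real.exp (-x)) (-Real.exp (-x)) (Ioi 0) x :=
    fun x _ => (((Real.hasDerivAt_exp (-x)).comp x (hasDerivAt_neg x)).congr_deriv
      (by ring)).hasDerivWithinAt
  rw [← himage, integral_image_eq_integral_abs_deriv_smul measurableSet_Ioi hderiv
    (Real.exp_injective.comp neg_injective).injOn]
  refine setIntegral_congr_fun measurableSet_Ioi fun x _ => ?_
  simp only [abs_neg, Real.abs_exp, Real.log_exp]

theorem integrableOn_exp_neg_mul_pow (n : ℕ) :
    IntegrableOn (fun x : ℝ => (Real.exp (-x) : ℂ) * (x : ℂ) ^ n) (Ioi 0) := by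
  simpa using GammaIntegral_convergent (s := n + 1) (by simp; positivity)

theorem integral_exp_neg_mul_pow (n : ℕ) :
    ∫ x in Ioi (0 : ℝ), (Real.exp (-x) : ℂ) * (x : ℂ) ^ n = n ! := by
  simpa [GammaIntegral] using (Gamma_eq_integral (s := n + 1) (by simp; positivity)).symm.trans
    (Gamma_nat_eq_factorial n)

theorem integral_exp_neg_mul_add_pow (z : ℂ) (k : ℕ) :
    ∫ x in Ioi (0 : ℝ), (Real.exp (-x) : ℂ) * (z + x) ^ k =
      k ! * ∑ j ∈ Finset.range (k + 1), z ^ j / j ! := by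
  simp_rw [add_pow, Finset.mul_sum]
  rw [integral_finsetSum _ fun j _ => IntegrableOn.congr_fun
    ((integrableOn_exp_neg_mul_pow (k - j)).const_mul (z ^ j * k.choose j))
    (fun x _ => by ring) measurableSet_Ioi]
  refine Finset.sum_congr rfl fun j hj => ?_
  have hjk : j ≤ k := Nat.lt_succ_iff.mp (Finset.mem_range.mp hj)
  calc ∫ x in Ioi (0 : ℝ), (Real.exp (-x) : ℂ) * (z ^ j * (x : ℂ) ^ (k - j) * k.choose j)
      = z ^ j * k.choose j * ∫ x in Ioi (0 : ℝ), (Real.exp (-x) : ℂ) * (x : ℂ) ^ (k - j) := by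
        rw [← integral_const_mul]; congr 1; ext x; ring
    _ = k ! * (z ^ j / j !) := by
        rw [integral_exp_neg_mul_pow, ← Nat.choose_mul_factorial_mul_factorial hjk]
        push_cast
        have hj_fac : (j ! : ℂ) ≠ 0 := mod_cast j.factorial_ne_zero
        field_simp

theorem stmt2_general (k : ℕ) (z : ℂ) :
    ∑ j ∈ Finset.range (k + 1), z ^ j / (Nat.factorial j : ℂ) =
      (1 / (Nat.factorial k : ℂ)) *
        ∫ u in Set.Ioo (0 : ℝ) 1, (z - (Real.log u : ℂ)) ^ k := by
  rw [integral_Ioo_zero_one_comp_log (fun t => (z - (t : ℂ)) ^ k)]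
  simp only [real_smul, ofReal_neg, sub_neg_eq_add]
  rw [integral_exp_neg_mul_add_pow, one_div, inv_mul_cancel_left₀ (mod_cast k.factorial_ne_zero)]

theorem stmt2 (k : ℕ) (hk : 0 < k) (z : ℂ) (hz : 0 < ‖z‖) (hre : 0 < z.re) :
    ∑ j ∈ Finset.range (k + 1), z ^ j / (Nat.factorial j : ℂ) =
      (1 / (Nat.factorial k : ℂ)) *
        ∫ u in Set.Ioo (0 : ℝ) 1, (z - (Real.log u : ℂ)) ^ k :=
  stmt2_general k z
end

section
/- For every positive real m, the improper integral ∫_0^1 [ -(2π/m)(1-u) cot(π u) + 2/(m u) ] du converges and equals (2 log 2π)/m. -/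
/-!
Put `g u = 2 / u - 2π (1 - u) cot (π u)`, so that the integrand is `g / m`, and
`F u = 2 log u - 2 (1 - u) log sin (π u)`. Then `F' = g + 2 log sin (π u)`, hence
`∫ₛᵗ g = F t - F s - 2 ∫ₛᵗ log sin (π u)`. As `s → 0⁺` and `t → 1⁻` we have `F t → 0`,
`F s → -2 log π` (because `sin (π s) / s → π`) and `∫₀¹ log sin (π u) = -log 2`, so the proper
integrals tend to `2 log 2π`. Finally `x cot x ≤ 1` on `(0, π)` makes `g` nonnegative, and for a
nonnegative integrand this limit is the Lebesgue integral.
-/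

open MeasureTheory Real Filter Set
open scoped Topology

theorem integrableOn_Ioo_and_integral_eq_of_tendsto_of_nonneg {f : ℝ → ℝ} {a b I : ℝ}
    (hab : a < b) (hf : ContinuousOn f (Ioo a b)) (hnn : ∀ x ∈ Ioo a b, 0 ≤ f x)
    (hI : Tendsto (fun p : ℝ × ℝ => ∫ x in p.1..p.2, f x) (𝓝[>] a ×ˢ 𝓝[<] b) (𝓝 I)) :
    IntegrableOn f (Ioo a b) ∧ ∫ x in Ioo a b, f x = I := by
  obtain ⟨s, -, hs, hs_lim⟩ := exists_seq_strictAnti_tendsto' hab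
  obtain ⟨t, -, ht, ht_lim⟩ := exists_seq_strictMono_tendsto' hab
  have hφ : AECover (volume.restrict (Ioo a b)) atTop fun n => Ioo (s n) (t n) :=
    aecover_Ioo_of_Ioo hs_lim ht_lim
  have hrestrict (n : ℕ) :
      (volume.restrict (Ioo a b)).restrict (Ioo (s n) (t n)) =
        volume.restrict (Ioo (s n) (t n)) := by
    rw [Measure.restrict_restrict measurableSet_Ioo,
      inter_eq_left.2 (Ioo_subset_Ioo (hs n).1.le (ht n).2.le)]
  have hfi (n : ℕ) : IntegrableOn f (Ioo (s n) (t n)) (volume.restrict (Ioo a b)) := by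
    rw [IntegrableOn, hrestrict]
    exact ((hf.mono (Icc_subset_Ioo (hs n).1 (ht n).2)).integrableOn_Icc).mono_set
      Ioo_subset_Icc_self
  have hlim : Tendsto (fun n => ∫ x in Ioo (s n) (t n), f x ∂volume.restrict (Ioo a b))
      atTop (𝓝 I) := by
    have hst : Tendsto (fun n => (s n, t n)) atTop (𝓝[>] a ×ˢ 𝓝[<] b) :=
      (tendsto_nhdsWithin_iff.2 ⟨hs_lim, .of_forall fun n => (hs n).1⟩).prodMk
        (tendsto_nhdsWithin_iff.2 ⟨ht_lim, .of_forall fun n => (ht n).2⟩)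
    refine (hI.comp hst).congr' ?_
    filter_upwards [hs_lim.eventually_lt ht_lim hab] with n hn
    rw [Function.comp_apply, intervalIntegral.integral_of_le hn.le,
      integral_Ioc_eq_integral_Ioo, hrestrict]
  have hf_nonneg : 0 ≤ᵐ[volume.restrict (Ioo a b)] f :=
    (ae_restrict_iff' measurableSet_Ioo).2 (ae_of_all _ hnn)
  have hint := hφ.integrable_of_integral_tendsto_of_nonneg_ae I hfi hf_nonneg hlim
  exact ⟨hint, hφ.integral_eq_of_tendsto I hint hlim⟩

theorem Real.mul_cot_le_one {x : ℝ} (h0 : 0 < x) (h1 : x < π) : x * cot x ≤ 1 := by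
  have hsin : 0 < sin x := sin_pos_of_pos_of_lt_pi h0 h1
  rw [cot_eq_cos_div_sin, mul_div_assoc', div_le_one hsin]
  rcases lt_or_ge x (π / 2) with hx | hx
  · have := lt_tan h0 hx
    rw [tan_eq_sin_div_cos, lt_div_iff₀ (cos_pos_of_mem_Ioo ⟨by linarith, hx⟩)] at this
    exact this.le
  · have : cos x ≤ 0 := cos_nonpos_of_pi_div_two_le_of_le hx (by linarith)
    nlinarith

theorem intervalIntegrable_log_sin_pi_mul (a b : ℝ) :
    IntervalIntegrable (fun u => log (sin (π * u))) volume a b := by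
  simpa [pi_ne_zero] using
    (intervalIntegrable_log_sin (a := π * a) (b := π * b)).comp_mul_left (c := π)

theorem integral_log_sin_pi_mul : ∫ u in (0 : ℝ)..1, log (sin (π * u)) = -log 2 := by
  rw [intervalIntegral.integral_comp_mul_left (fun x => log (sin x)) pi_ne_zero, mul_zero,
    mul_one, integral_log_sin_zero_pi, smul_eq_mul]
  field_simp

theorem tendsto_log_sin_pi_mul_sub_log :
    Tendsto (fun u => log (sin (π * u)) - log u) (𝓝[>] 0) (𝓝 (log π)) := by
  have hcont : ContinuousAt (fun u => log (π * sinc (π * u))) 0 :=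
    ContinuousAt.log (by fun_prop) (by simp [pi_ne_zero])
  have hlim := hcont.tendsto.mono_left (nhdsWithin_le_nhds (s := Ioi 0))
  rw [mul_zero, sinc_zero, mul_one] at hlim
  refine hlim.congr' ?_
  filter_upwards [Ioo_mem_nhdsGT one_pos] with u ⟨h0, h1⟩
  have hsin : 0 < sin (π * u) :=
    sin_pos_of_pos_of_lt_pi (by positivity) (by nlinarith [pi_pos])
  rw [sinc_of_ne_zero (by positivity), ← log_div hsin.ne' h0.ne']
  congr 1
  field_simp

theorem tendsto_mul_log_sin_pi_mul :
    Tendsto (fun u => u * log (sin (π * u))) (𝓝[>] 0) (𝓝 0) := by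
  have hid : Tendsto (fun u : ℝ => u) (𝓝[>] 0) (𝓝 0) := nhdsWithin_le_nhds
  have hmul_log : Tendsto (fun u => u * log u) (𝓝[>] 0) (𝓝 0) := by
    simpa using (continuous_mul_log.tendsto 0).mono_left nhdsWithin_le_nhds
  have := (hid.mul tendsto_log_sin_pi_mul_sub_log).add hmul_log
  rw [zero_mul, zero_add] at this
  exact this.congr fun u => by ring

noncomputable def cotIntegrand (u : ℝ) : ℝ := 2 / u - 2 * π * (1 - u) * cot (π * u)

theorem cotIntegrand_nonneg {u : ℝ} (h0 : 0 < u) (h1 : u < 1) : 0 ≤ cotIntegrand u := by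
  have hcot : π * u * cot (π * u) ≤ 1 :=
    mul_cot_le_one (by positivity) (by nlinarith [pi_pos])
  have : 2 * π * (1 - u) * cot (π * u) = 2 / u * ((1 - u) * (π * u * cot (π * u))) := by
    field_simp
  rw [cotIntegrand, this, sub_nonneg]
  refine mul_le_of_le_one_right (by positivity) ?_
  nlinarith

theorem continuousOn_cotIntegrand : ContinuousOn cotIntegrand (Ioo 0 1) := by
  intro u ⟨h0, h1⟩
  have hsin : sin (π * u) ≠ 0 :=
    (sin_pos_of_pos_of_lt_pi (by positivity) (by nlinarith [pi_pos])).ne'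
  have hu : u ≠ 0 := h0.ne'
  refine ContinuousAt.continuousWithinAt ?_
  show ContinuousAt (fun u => 2 / u - 2 * π * (1 - u) * cot (π * u)) u
  simp only [cot_eq_cos_div_sin]
  fun_prop (disch := assumption)

noncomputable def cotLogSinPrimitive (u : ℝ) : ℝ := 2 * log u - 2 * (1 - u) * log (sin (π * u))

theorem hasDerivAt_cotLogSinPrimitive {u : ℝ} (h0 : 0 < u) (h1 : u < 1) :
    HasDerivAt cotLogSinPrimitive (cotIntegrand u + 2 * log (sin (π * u))) u := by
  have hsin : sin (π * u) ≠ 0 :=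
    (sin_pos_of_pos_of_lt_pi (by positivity) (by nlinarith [pi_pos])).ne'
  have hlog_sin : HasDerivAt (fun v => log (sin (π * v))) (cos (π * u) * π / sin (π * u)) u :=
    (((hasDerivAt_id u).const_mul π).sin.log (by simpa using hsin)).congr_deriv (by simp)
  have hF := ((hasDerivAt_log h0.ne').const_mul 2).sub
    ((((hasDerivAt_id u).const_sub 1).mul hlog_sin).const_mul 2)
  refine (hF.congr_of_eventuallyEq (.of_forall fun v => ?_)).congr_deriv ?_
  · simp only [cotLogSinPrimitive, Pi.sub_apply, Pi.mul_apply, id, mul_assoc]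
  · simp only [cotIntegrand, cot_eq_cos_div_sin, id]
    field_simp
    ring

theorem tendsto_cotLogSinPrimitive_zero :
    Tendsto cotLogSinPrimitive (𝓝[>] 0) (𝓝 (-2 * log π)) := by
  have := (tendsto_log_sin_pi_mul_sub_log.const_mul (-2)).add
    (tendsto_mul_log_sin_pi_mul.const_mul 2)
  rw [mul_zero, add_zero] at this
  exact this.congr fun u => by simp only [cotLogSinPrimitive]; ring

theorem tendsto_cotLogSinPrimitive_one : Tendsto cotLogSinPrimitive (𝓝[<] 1) (𝓝 0) := by
  have hrefl : Tendsto (fun u : ℝ => 1 - u) (𝓝[<] 1) (𝓝[>] 0) := by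
    refine tendsto_nhdsWithin_iff.2 ⟨?_, eventually_mem_nhdsWithin.mono fun u hu => ?_⟩
    · exact ((continuous_sub_left 1).tendsto' 1 0 (sub_self 1)).mono_left nhdsWithin_le_nhds
    · exact mem_Ioi.2 (sub_pos.2 hu)
  have hlog : Tendsto (fun u : ℝ => 2 * log u) (𝓝[<] 1) (𝓝 0) := by
    simpa using ((continuousAt_log one_ne_zero).tendsto.const_mul 2).mono_left
      (nhdsWithin_le_nhds (s := Iio 1))
  have := hlog.sub ((tendsto_mul_log_sin_pi_mul.comp hrefl).const_mul 2)
  rw [mul_zero, sub_zero] at this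
  refine this.congr fun u => ?_
  simp only [cotLogSinPrimitive, Function.comp_apply, mul_one_sub, sin_pi_sub]
  ring

theorem integral_cotIntegrand_eq {s t : ℝ} (hs : 0 < s) (hst : s ≤ t) (ht : t < 1) :
    ∫ u in s..t, cotIntegrand u =
      cotLogSinPrimitive t - cotLogSinPrimitive s - 2 * ∫ u in s..t, log (sin (π * u)) := by
  have hsub : uIcc s t ⊆ Ioo 0 1 := by
    rw [uIcc_of_le hst]
    exact Icc_subset_Ioo hs ht
  have hint : IntervalIntegrable cotIntegrand volume s t :=
    (continuousOn_cotIntegrand.mono hsub).intervalIntegrable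
  have hlog := (intervalIntegrable_log_sin_pi_mul s t).const_mul 2
  have hFTC := intervalIntegral.integral_eq_sub_of_hasDerivAt
    (fun u hu => hasDerivAt_cotLogSinPrimitive (hsub hu).1 (hsub hu).2) (hint.add hlog)
  rw [intervalIntegral.integral_add hint hlog, intervalIntegral.integral_const_mul] at hFTC
  linarith

theorem tendsto_integral_cotIntegrand :
    Tendsto (fun p : ℝ × ℝ => ∫ u in p.1..p.2, cotIntegrand u) (𝓝[>] 0 ×ˢ 𝓝[<] 1)
      (𝓝 (2 * log (2 * π))) := by
  set Φ : ℝ → ℝ := fun x => ∫ u in (0 : ℝ)..x, log (sin (π * u))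
  have hΦ : Continuous Φ :=
    intervalIntegral.continuous_primitive (fun a b => intervalIntegrable_log_sin_pi_mul a b) 0
  have hlim := ((tendsto_cotLogSinPrimitive_one.comp tendsto_snd).sub
    (tendsto_cotLogSinPrimitive_zero.comp tendsto_fst)).sub
    ((((hΦ.tendsto 1).comp (tendsto_snd.mono_right nhdsWithin_le_nhds)).sub
      ((hΦ.tendsto 0).comp (tendsto_fst.mono_right nhdsWithin_le_nhds))).const_mul 2)
  have hval : 0 - -2 * log π - 2 * (Φ 1 - Φ 0) = 2 * log (2 * π) := by
    simp only [Φ, integral_log_sin_pi_mul, intervalIntegral.integral_same,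
      log_mul two_ne_zero pi_ne_zero]
    ring
  rw [hval] at hlim
  refine hlim.congr' ?_
  filter_upwards [prod_mem_prod (Ioo_mem_nhdsGT one_half_pos) (Ioo_mem_nhdsLT one_half_lt_one)]
    with ⟨s, t⟩ ⟨⟨hs, hs1⟩, ⟨ht0, ht⟩⟩
  have hΦst := intervalIntegral.integral_interval_sub_left
    (intervalIntegrable_log_sin_pi_mul 0 t) (intervalIntegrable_log_sin_pi_mul 0 s)
  simp only [Function.comp_apply, Φ]
  rw [integral_cotIntegrand_eq hs (hs1.trans ht0).le ht, hΦst]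

theorem stmt3_general (m : ℝ) :
    IntegrableOn
      (fun u : ℝ => -(2 * π / m) * (1 - u) * Real.cot (π * u) + 2 / (m * u))
      (Set.Ioo (0 : ℝ) 1) ∧
    ∫ u in Set.Ioo (0 : ℝ) 1,
        (-(2 * π / m) * (1 - u) * Real.cot (π * u) + 2 / (m * u)) =
      2 * Real.log (2 * π) / m := by
  have hfun : (fun u : ℝ => -(2 * π / m) * (1 - u) * Real.cot (π * u) + 2 / (m * u)) =
      fun u => m⁻¹ * cotIntegrand u := by
    funext u
    simp only [cotIntegrand, div_eq_mul_inv, mul_inv]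
    ring
  obtain ⟨hint, hval⟩ := integrableOn_Ioo_and_integral_eq_of_tendsto_of_nonneg one_pos
    continuousOn_cotIntegrand (fun u hu => cotIntegrand_nonneg hu.1 hu.2)
    tendsto_integral_cotIntegrand
  rw [hfun, integral_const_mul, hval]
  exact ⟨hint.const_mul _, by ring⟩

theorem stmt3 (m : ℝ) (hm : 0 < m) :
    IntegrableOn
      (fun u : ℝ => -(2 * π / m) * (1 - u) * Real.cot (π * u) + 2 / (m * u))
      (Set.Ioo (0 : ℝ) 1) ∧
    ∫ u in Set.Ioo (0 : ℝ) 1,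
        (-(2 * π / m) * (1 - u) * Real.cot (π * u) + 2 / (m * u)) =
      2 * Real.log (2 * π) / m :=
  stmt3_general m
end

section
/- For a positive integer n and a complex number m with Re(m) > 0, the following identity holds: ∑_{j=1}^{k} m^{-j} H_j(n)/(k-j)! = (1/k!) ∫_0^1 ( -1 + (1 - (log u)/m)^k ) · (1 + n u^{n+1} - (n+1) u^n)/(1-u)² du, where k is a positive integer and H_j(n) = ∑_{q=1}^{n} q^{-j} is the generalized harmonic number. -/
/-!
Both factors of the integrand are finite sums: `(1 + n u^(n+1) - (n+1) u^n) / (1-u)^2` is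
`∑_{q<n} (q+1) u^q`, and `-1 + (1 + y)^k = ∑_{i=1}^k C(k,i) y^i` with `y = -log u / m`.
The substitution `u = e^(-t)` turns each monomial into a Gamma integral,
`∫_0^1 u^q (-log u)^i du = i! / (q+1)^(i+1)`, so the integral equals
`∑_i C(k,i) i! m^(-i) H_i(n)`, and `C(k,i) i! / k! = 1 / (k-i)!`.
-/

open MeasureTheory Real Set

lemma image_exp_neg_Ioi : (fun t : ℝ => exp (-t)) '' Ioi 0 = Ioo 0 1 := by
  ext x
  constructor
  · rintro ⟨t, ht, rfl⟩
    exact ⟨exp_pos _, exp_lt_one_iff.mpr (neg_neg_of_pos ht)⟩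
  · rintro ⟨hx0, hx1⟩
    exact ⟨-log x, neg_pos.mpr (log_neg hx0 hx1), by simp [exp_log hx0]⟩

section ExpNegSubstitution

variable {E : Type*} [NormedAddCommGroup E] [NormedSpace ℝ E]

lemma hasDerivWithinAt_exp_neg (t : ℝ) (s : Set ℝ) :
    HasDerivWithinAt (fun t : ℝ => exp (-t)) (-exp (-t)) s t := by
  simpa using ((hasDerivAt_neg t).exp).hasDerivWithinAt

lemma integrableOn_Ioo_zero_one_iff_exp_neg (g : ℝ → E) :
    IntegrableOn g (Ioo 0 1) ↔ IntegrableOn (fun t => exp (-t) • g (exp (-t))) (Ioi 0) := by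
  rw [← image_exp_neg_Ioi, integrableOn_image_iff_integrableOn_abs_deriv_smul measurableSet_Ioi
    (fun t _ => hasDerivWithinAt_exp_neg t _) (exp_injective.comp neg_injective).injOn]
  simp only [abs_neg, abs_of_pos (exp_pos _)]

lemma integral_Ioo_zero_one_eq_exp_neg (g : ℝ → E) :
    ∫ x in Ioo 0 1, g x = ∫ t in Ioi 0, exp (-t) • g (exp (-t)) := by
  rw [← image_exp_neg_Ioi, integral_image_eq_integral_abs_deriv_smul measurableSet_Ioi
    (fun t _ => hasDerivWithinAt_exp_neg t _) (exp_injective.comp neg_injective).injOn]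
  simp only [abs_neg, abs_of_pos (exp_pos _)]

end ExpNegSubstitution

lemma exp_neg_smul_pow_mul_neg_log_pow (q i : ℕ) (t : ℝ) :
    exp (-t) • (exp (-t) ^ q * (-log (exp (-t))) ^ i) = t ^ (i : ℝ) * exp (-((q + 1) * t)) := by
  rw [log_exp, neg_neg, smul_eq_mul, rpow_natCast, ← exp_nat_mul, ← mul_assoc, ← exp_add]
  ring_nf

lemma integrableOn_pow_mul_neg_log_pow (q i : ℕ) :
    IntegrableOn (fun x : ℝ => x ^ q * (-log x) ^ i) (Ioo 0 1) := by
  rw [integrableOn_Ioo_zero_one_iff_exp_neg]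
  simp_rw [exp_neg_smul_pow_mul_neg_log_pow]
  simpa only [rpow_one, neg_mul] using
    integrableOn_rpow_mul_exp_neg_mul_rpow (p := 1) (s := i) (b := q + 1)
    (neg_one_lt_zero.trans_le i.cast_nonneg) one_pos (by positivity)

lemma integral_pow_mul_neg_log_pow (q i : ℕ) :
    ∫ x in Ioo 0 1, x ^ q * (-log x) ^ i = (i.factorial : ℝ) / ((q : ℝ) + 1) ^ (i + 1) := by
  rw [integral_Ioo_zero_one_eq_exp_neg]
  simp_rw [exp_neg_smul_pow_mul_neg_log_pow]
  have hGamma := integral_rpow_mul_exp_neg_mul_Ioi (a := i + 1) (r := q + 1)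
    (by positivity) (by positivity)
  rw [add_sub_cancel_right] at hGamma
  rw [hGamma, Gamma_nat_eq_factorial, ← Nat.cast_add_one i, rpow_natCast, one_div_pow,
    one_div_mul_eq_div]

lemma one_sub_sq_mul_sum_range {R : Type*} [CommRing R] (x : R) (n : ℕ) :
    (1 - x) ^ 2 * ∑ q ∈ Finset.range n, ((q : R) + 1) * x ^ q =
      1 + n * x ^ (n + 1) - (n + 1) * x ^ n := by
  induction n with
  | zero => simp
  | succ n ih =>
    rw [Finset.sum_range_succ, mul_add, ih]
    push_cast
    ring

lemma neg_one_add_one_add_pow {R : Type*} [CommRing R] (y : R) (k : ℕ) :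
    -1 + (1 + y) ^ k = ∑ i ∈ Finset.Icc 1 k, (k.choose i : R) * y ^ i := by
  rw [add_comm 1 y, add_pow, Finset.range_eq_Ico, Finset.sum_eq_sum_Ico_succ_bot k.succ_pos,
    zero_add, Nat.succ_eq_add_one, Finset.Ico_add_one_right_eq_Icc]
  simp [mul_comm]

lemma sum_range_add_one_eq_sum_Icc {M : Type*} [AddCommMonoid M] (f : ℕ → M) (n : ℕ) :
    ∑ q ∈ Finset.range n, f (q + 1) = ∑ q ∈ Finset.Icc 1 n, f q := by
  rw [Finset.range_eq_Ico, Finset.sum_Ico_add', Finset.Ico_add_one_right_eq_Icc]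

lemma integral_sum_sum_mul_pow_mul_neg_log_pow (s t : Finset ℕ) (c : ℕ → ℕ → ℂ) :
    ∫ u in Ioo (0 : ℝ) 1, ∑ i ∈ s, ∑ q ∈ t, c i q * ((u ^ q * (-log u) ^ i : ℝ) : ℂ) =
      ∑ i ∈ s, ∑ q ∈ t, c i q * ((i.factorial : ℂ) / ((q : ℂ) + 1) ^ (i + 1)) := by
  have hint (i q : ℕ) : Integrable (fun u : ℝ => c i q * ((u ^ q * (-log u) ^ i : ℝ) : ℂ))
      (volume.restrict (Ioo 0 1)) :=
    (integrableOn_pow_mul_neg_log_pow q i).ofReal.const_mul _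
  rw [integral_finsetSum _ fun i _ => integrable_finsetSum _ fun q _ => hint i q]
  refine Finset.sum_congr rfl fun i _ => ?_
  rw [integral_finsetSum _ fun q _ => hint i q]
  refine Finset.sum_congr rfl fun q _ => ?_
  rw [integral_const_mul, integral_complex_ofReal, integral_pow_mul_neg_log_pow]
  simp

theorem stmt19_general (k n : ℕ) (m : ℂ) :
    ∑ j ∈ Finset.Icc 1 k,
        m ^ (-(j : ℤ)) * (∑ q ∈ Finset.Icc 1 n, (q : ℂ) ^ (-(j : ℤ))) /
          (Nat.factorial (k - j) : ℂ) =
      (1 / (Nat.factorial k : ℂ)) *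
        ∫ u in Set.Ioo (0 : ℝ) 1,
          (-1 + (1 - (Real.log u : ℂ) / m) ^ k) *
            (1 + n * (u : ℂ) ^ (n + 1) - (n + 1) * (u : ℂ) ^ n) / (1 - (u : ℂ)) ^ 2 := by
  have hexpand : ∀ u ∈ Ioo (0 : ℝ) 1,
      (-1 + (1 - (log u : ℂ) / m) ^ k) *
          (1 + n * (u : ℂ) ^ (n + 1) - (n + 1) * (u : ℂ) ^ n) / (1 - (u : ℂ)) ^ 2 =
        ∑ i ∈ Finset.Icc 1 k, ∑ q ∈ Finset.range n,
          (k.choose i * m⁻¹ ^ i * (q + 1)) * ((u ^ q * (-log u) ^ i : ℝ) : ℂ) := by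
    intro u hu
    have hu1 : (1 - u : ℂ) ≠ 0 := sub_ne_zero.mpr (by exact_mod_cast hu.2.ne')
    rw [mul_div_assoc, ← one_sub_sq_mul_sum_range, mul_div_cancel_left₀ _ (pow_ne_zero 2 hu1),
      show 1 - (log u : ℂ) / m = 1 + -log u * m⁻¹ by ring, neg_one_add_one_add_pow,
      Finset.sum_mul_sum]
    refine Finset.sum_congr rfl fun i _ => Finset.sum_congr rfl fun q _ => ?_
    push_cast
    ring
  rw [setIntegral_congr_fun measurableSet_Ioo hexpand, integral_sum_sum_mul_pow_mul_neg_log_pow,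
    Finset.mul_sum]
  refine Finset.sum_congr rfl fun i hi => ?_
  rw [← sum_range_add_one_eq_sum_Icc, Finset.mul_sum, Finset.sum_div, Finset.mul_sum]
  refine Finset.sum_congr rfl fun q _ => ?_
  have hq : (q : ℂ) + 1 ≠ 0 := Nat.cast_add_one_ne_zero q
  have hkfac : (k.factorial : ℂ) ≠ 0 := Nat.cast_ne_zero.mpr k.factorial_ne_zero
  have hifac : (i.factorial : ℂ) ≠ 0 := Nat.cast_ne_zero.mpr i.factorial_ne_zero
  rw [Nat.cast_choose ℂ (Finset.mem_Icc.mp hi).2]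
  push_cast
  simp only [zpow_neg, zpow_natCast]
  field_simp
  ring

theorem stmt19 (k n : ℕ) (hk : 0 < k) (hn : 0 < n) (m : ℂ) (hm : 0 < m.re) :
    ∑ j ∈ Finset.Icc 1 k,
        m ^ (-(j : ℤ)) * (∑ q ∈ Finset.Icc 1 n, (q : ℂ) ^ (-(j : ℤ))) /
          (Nat.factorial (k - j) : ℂ) =
      (1 / (Nat.factorial k : ℂ)) *
        ∫ u in Set.Ioo (0 : ℝ) 1,
          (-1 + (1 - (Real.log u : ℂ) / m) ^ k) *
            (1 + n * (u : ℂ) ^ (n + 1) - (n + 1) * (u : ℂ) ^ n) / (1 - (u : ℂ)) ^ 2 :=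
  stmt19_general k n m
end
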